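/- Let φ : [0,1] → [0,1] be Lipschitz with constant L_φ ≥ 1, let K be the Koopman operator Kf = f∘φ, and B_n the Bernstein operator. Then for every f ∈ C([0,1]), n ≥ 1, k ≥ 1, and δ = 1/√n: ∑_{j=0}^{k−1} ω_{(B_n K)^j f}(L_φ δ) ≤ ∑_{l=1}^{k} 4^{k−l} ω_f(L_φ^l δ). -/

import Mathlib

/-!
Write `δ = 1/√n`. Bounding `|h(k/n) - h(x)| ≤ (1 + (x - k/n)²/δ²) ω_h(δ)` and summing against the
Bernstein basis, whose variance at `x` is `x(1-x)/n ≤ δ²/4`, gives `|B_n h - h| ≤ (5/4) ω_h(δ)`,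
hence `ω_{B_n h}(t) ≤ ω_h(t) + (5/2) ω_h(δ)`. Composition with `φ` turns `ω_h(t)` into `ω_h(Lφ t)`,
so `a_j = ω_{(B_n K)^j f}(Lφ δ)` satisfies `a_j ≤ ω_f(Lφ^{j+1} δ) + (5/2) ∑_{i<j} a_i`. The partial
sums `S_j` of the `a_i` thus obey `S_{j+1} ≤ 4 S_j + ω_f(Lφ^{j+1} δ)`, which unrolls to the claim.
-/

noncomputable def bern (n k : ℕ) (x : ℝ) : ℝ :=
  (n.choose k : ℝ) * x ^ k * (1 - x) ^ (n - k)

noncomputable def bernOp (n : ℕ) (f : ℝ → ℝ) (x : ℝ) : ℝ :=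
  ∑ k ∈ Finset.range (n + 1), f ((k : ℝ) / (n : ℝ)) * bern n k x

noncomputable def modCont (f : ℝ → ℝ) (δ : ℝ) : ℝ :=
  sSup {r : ℝ | ∃ x ∈ Set.Icc (0 : ℝ) 1, ∃ y ∈ Set.Icc (0 : ℝ) 1, |x - y| ≤ δ ∧ r = |f x - f y|}

open Finset unitInterval

section Bernstein

lemma sum_bern (n : ℕ) (x : ℝ) : ∑ k ∈ range (n + 1), bern n k x = 1 := by
  have h := add_pow x (1 - x) n
  rw [add_sub_cancel, one_pow] at h
  rw [h]
  refine sum_congr rfl fun k _ => ?_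
  simp only [bern]
  ring

lemma bern_nonneg (n k : ℕ) {x : ℝ} (hx : x ∈ I) : 0 ≤ bern n k x :=
  mul_nonneg (mul_nonneg (Nat.cast_nonneg _) (pow_nonneg hx.1 k))
    (pow_nonneg (sub_nonneg.mpr hx.2) _)

lemma natCast_div_mem_unitInterval {n k : ℕ} (hk : k ∈ range (n + 1)) : (k / n : ℝ) ∈ I :=
  ⟨by positivity, div_le_one_of_le₀ (by exact_mod_cast mem_range_succ_iff.mp hk) n.cast_nonneg⟩

lemma sum_sq_sub_mul_bern {n : ℕ} (hn : n ≠ 0) {x : ℝ} (hx : x ∈ I) :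
    ∑ k ∈ range (n + 1), (x - k / n) ^ 2 * bern n k x = x * (1 - x) / n := by
  rw [← bernstein.variance hn ⟨x, hx⟩, ← Fin.sum_univ_eq_sum_range]
  simp [bern, bernstein.z, bernstein_apply]

lemma bernOp_sub_eq_sum (n : ℕ) (h : ℝ → ℝ) (x : ℝ) :
    bernOp n h x - h x = ∑ k ∈ range (n + 1), (h (k / n) - h x) * bern n k x := by
  simp only [bernOp, sub_mul, sum_sub_distrib, ← mul_sum, sum_bern, mul_one]

lemma abs_bernOp_le {h : ℝ → ℝ} {M : ℝ} (hM : ∀ x ∈ I, |h x| ≤ M) (n : ℕ) {x : ℝ} (hx : x ∈ I) :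
    |bernOp n h x| ≤ M :=
  calc |bernOp n h x| ≤ ∑ k ∈ range (n + 1), |h (k / n)| * bern n k x := by
        simpa only [bernOp, abs_mul, abs_of_nonneg (bern_nonneg n _ hx)]
          using abs_sum_le_sum_abs (fun k : ℕ => h (k / n) * bern n k x) (range (n + 1))
    _ ≤ ∑ k ∈ range (n + 1), M * bern n k x :=
        sum_le_sum fun k hk => mul_le_mul_of_nonneg_right
          (hM _ (natCast_div_mem_unitInterval hk)) (bern_nonneg n k hx)
    _ = M := by rw [← mul_sum, sum_bern, mul_one]

end Bernstein

section ModulusOfContinuity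

variable {f : ℝ → ℝ} {M : ℝ}

lemma modCont_nonneg (f : ℝ → ℝ) (δ : ℝ) : 0 ≤ modCont f δ := by
  refine Real.sSup_nonneg fun r ⟨x, _, y, _, _, hr⟩ => ?_
  rw [hr]
  exact abs_nonneg _

lemma modCont_le_of_forall {δ C : ℝ} (hC : 0 ≤ C)
    (h : ∀ x ∈ I, ∀ y ∈ I, |x - y| ≤ δ → |f x - f y| ≤ C) : modCont f δ ≤ C :=
  Real.sSup_le (fun _ ⟨x, hx, y, hy, hxy, hr⟩ => hr ▸ h x hx y hy hxy) hC

/-- `modCont f δ` is an `sSup`, which is junk (`0`) unless `f` is bounded on `I`. -/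
lemma abs_sub_le_modCont (hM : ∀ x ∈ I, |f x| ≤ M) {δ x y : ℝ} (hx : x ∈ I) (hy : y ∈ I)
    (hxy : |x - y| ≤ δ) : |f x - f y| ≤ modCont f δ := by
  refine le_csSup ⟨M + M, fun _ ⟨a, ha, b, hb, _, hr⟩ => ?_⟩ ⟨x, hx, y, hy, hxy, rfl⟩
  rw [hr]
  exact (abs_sub _ _).trans (add_le_add (hM a ha) (hM b hb))

lemma abs_sub_le_nat_mul_modCont (hM : ∀ x ∈ I, |f x| ≤ M) {δ : ℝ} (hδ : 0 ≤ δ) (N : ℕ)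
    {u v : ℝ} (hu : u ∈ I) (hv : v ∈ I) (huv : u ≤ v) (h : v - u ≤ N * δ) :
    |f u - f v| ≤ N * modCont f δ := by
  induction N generalizing v with
  | zero =>
    obtain rfl : u = v := le_antisymm huv (by simpa using h)
    simp
  | succ N ih =>
    set w := max u (v - δ)
    have hwv : w ≤ v := max_le huv (by linarith)
    have hw : w ∈ I := ⟨hu.1.trans (le_max_left _ _), hwv.trans hv.2⟩
    have huw : |f u - f w| ≤ N * modCont f δ := by
      refine ih hw (le_max_left _ _) (sub_le_iff_le_add'.mpr (max_le ?_ ?_))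
      · have : 0 ≤ N * δ := by positivity
        linarith
      · push_cast at h
        linarith
    have hwv' : |f w - f v| ≤ modCont f δ :=
      abs_sub_le_modCont hM hw hv (abs_le.mpr ⟨by linarith [le_max_right u (v - δ)], by linarith⟩)
    calc |f u - f v| ≤ |f u - f w| + |f w - f v| := abs_sub_le _ _ _
      _ ≤ (N + 1 : ℕ) * modCont f δ := by push_cast; linarith

lemma natCeil_le_one_add_sq (q : ℝ) : (⌈q⌉₊ : ℝ) ≤ 1 + q ^ 2 := by
  rcases le_total q 1 with hq | hq
  · have : ⌈q⌉₊ ≤ 1 := Nat.ceil_le.mpr (by exact_mod_cast hq)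
    have : (⌈q⌉₊ : ℝ) ≤ 1 := by exact_mod_cast this
    nlinarith
  · nlinarith [Nat.ceil_lt_add_one (zero_le_one.trans hq)]

lemma abs_sub_le_one_add_sq_div_sq_mul_modCont (hM : ∀ x ∈ I, |f x| ≤ M) {δ : ℝ} (hδ : 0 < δ)
    {u v : ℝ} (hu : u ∈ I) (hv : v ∈ I) :
    |f u - f v| ≤ (1 + (u - v) ^ 2 / δ ^ 2) * modCont f δ := by
  wlog huv : u ≤ v generalizing u v
  · have := this hv hu (le_of_not_ge huv)
    rwa [abs_sub_comm, ← neg_sub u v, neg_sq] at this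
  have hceil : v - u ≤ ⌈(v - u) / δ⌉₊ * δ := (div_le_iff₀ hδ).mp (Nat.le_ceil _)
  calc |f u - f v| ≤ ⌈(v - u) / δ⌉₊ * modCont f δ :=
        abs_sub_le_nat_mul_modCont hM hδ.le _ hu hv huv hceil
    _ ≤ (1 + ((v - u) / δ) ^ 2) * modCont f δ :=
        mul_le_mul_of_nonneg_right (natCeil_le_one_add_sq _) (modCont_nonneg f δ)
    _ = (1 + (u - v) ^ 2 / δ ^ 2) * modCont f δ := by ring

lemma modCont_comp_le (hM : ∀ x ∈ I, |f x| ≤ M) {φ : ℝ → ℝ} (hφ : Set.MapsTo φ I I)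
    {L : ℝ} (hL0 : 0 ≤ L) (hL : ∀ x ∈ I, ∀ y ∈ I, |φ x - φ y| ≤ L * |x - y|) (t : ℝ) :
    modCont (f ∘ φ) t ≤ modCont f (L * t) :=
  modCont_le_of_forall (modCont_nonneg _ _) fun x hx y hy hxy =>
    abs_sub_le_modCont hM (hφ hx) (hφ hy) ((hL x hx y hy).trans (by gcongr))

end ModulusOfContinuity

lemma abs_bernOp_sub_le {h : ℝ → ℝ} {M : ℝ} (hM : ∀ x ∈ I, |h x| ≤ M) {n : ℕ} (hn : 1 ≤ n)
    {x : ℝ} (hx : x ∈ I) : |bernOp n h x - h x| ≤ 5 / 4 * modCont h (1 / √n) := by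
  set δ := 1 / √(n : ℝ)
  set ω := modCont h δ
  have hn' : (0 : ℝ) < n := by exact_mod_cast hn
  have hδ : 0 < δ := by positivity
  have hδ2 : δ ^ 2 = 1 / n := by rw [div_pow, one_pow, Real.sq_sqrt hn'.le]
  have hω : 0 ≤ ω := modCont_nonneg h δ
  have hx4 : x * (1 - x) ≤ 1 / 4 := by nlinarith [sq_nonneg (x - 1 / 2)]
  calc |bernOp n h x - h x|
      ≤ ∑ k ∈ range (n + 1), |h (k / n) - h x| * bern n k x := by
        simpa only [bernOp_sub_eq_sum, abs_mul, abs_of_nonneg (bern_nonneg n _ hx)]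
          using abs_sum_le_sum_abs (fun k : ℕ => (h (k / n) - h x) * bern n k x) (range (n + 1))
    _ ≤ ∑ k ∈ range (n + 1), (ω * bern n k x + ω / δ ^ 2 * ((x - k / n) ^ 2 * bern n k x)) :=
        sum_le_sum fun k hk => by
          rw [abs_sub_comm]
          refine (mul_le_mul_of_nonneg_right (abs_sub_le_one_add_sq_div_sq_mul_modCont hM hδ hx
            (natCast_div_mem_unitInterval hk)) (bern_nonneg n k hx)).trans_eq ?_
          ring
    _ = ω + ω * (x * (1 - x)) := by
        rw [sum_add_distrib, ← mul_sum, ← mul_sum, sum_bern, sum_sq_sub_mul_bern (by omega) hx, hδ2]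
        field_simp
    _ ≤ 5 / 4 * ω := by nlinarith

lemma modCont_bernOp_le {h : ℝ → ℝ} {M : ℝ} (hM : ∀ x ∈ I, |h x| ≤ M) {n : ℕ} (hn : 1 ≤ n)
    (t : ℝ) : modCont (bernOp n h) t ≤ modCont h t + 5 / 2 * modCont h (1 / √n) := by
  have := modCont_nonneg h t
  have := modCont_nonneg h (1 / √n)
  refine modCont_le_of_forall (by positivity) fun x hx y hy hxy => ?_
  have hx' := abs_bernOp_sub_le hM hn hx
  have hy' := abs_bernOp_sub_le hM hn hy
  have hxy' := abs_sub_le_modCont hM hx hy hxy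
  rw [abs_sub_comm] at hy'
  have := dist_triangle4 (bernOp n h x) (h x) (h y) (bernOp n h y)
  simp only [Real.dist_eq] at this
  linarith

/-- A discrete Grönwall inequality. -/
lemma le_sum_pow_mul_of_le_mul_add {S b : ℕ → ℝ} {C : ℝ} (hC : 0 ≤ C) (h0 : S 0 ≤ 0)
    (hS : ∀ j, S (j + 1) ≤ C * S j + b (j + 1)) (k : ℕ) :
    S k ≤ ∑ l ∈ Icc 1 k, C ^ (k - l) * b l := by
  induction k with
  | zero => simpa using h0
  | succ k ih =>
    calc S (k + 1) ≤ C * ∑ l ∈ Icc 1 k, C ^ (k - l) * b l + b (k + 1) :=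
          (hS k).trans (by gcongr)
      _ = ∑ l ∈ Icc 1 (k + 1), C ^ (k + 1 - l) * b l := by
        rw [sum_Icc_succ_top (by omega), mul_sum, Nat.sub_self, pow_zero, one_mul]
        congr 1
        refine sum_congr rfl fun l hl => ?_
        rw [Nat.sub_add_comm (mem_Icc.mp hl).2, pow_succ]
        ring

section KoopmanBernstein

variable {φ : ℝ → ℝ} {L : ℝ} {n : ℕ}

lemma abs_iterate_bernOp_comp_le (hφ : Set.MapsTo φ I I) {f : ℝ → ℝ} {M : ℝ}
    (hM : ∀ x ∈ I, |f x| ≤ M) (j : ℕ) :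
    ∀ x ∈ I, |(fun g : ℝ → ℝ => bernOp n (g ∘ φ))^[j] f x| ≤ M := by
  induction j with
  | zero => exact hM
  | succ j ih =>
    rw [Function.iterate_succ']
    exact fun x hx => abs_bernOp_le (fun y hy => ih (φ y) (hφ hy)) n hx

lemma modCont_bernOp_comp_le (hφ : Set.MapsTo φ I I) (hL0 : 0 ≤ L)
    (hL : ∀ x ∈ I, ∀ y ∈ I, |φ x - φ y| ≤ L * |x - y|) {g : ℝ → ℝ} {M : ℝ}
    (hM : ∀ x ∈ I, |g x| ≤ M) (hn : 1 ≤ n) (t : ℝ) :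
    modCont (bernOp n (g ∘ φ)) t ≤ modCont g (L * t) + 5 / 2 * modCont g (L * (1 / √n)) := by
  have hMφ : ∀ x ∈ I, |(g ∘ φ) x| ≤ M := fun x hx => hM (φ x) (hφ hx)
  have := modCont_comp_le hM hφ hL0 hL t
  have := modCont_comp_le hM hφ hL0 hL (1 / √n)
  linarith [modCont_bernOp_le hMφ hn t]

lemma modCont_iterate_bernOp_comp_le (hφ : Set.MapsTo φ I I) (hL0 : 0 ≤ L)
    (hL : ∀ x ∈ I, ∀ y ∈ I, |φ x - φ y| ≤ L * |x - y|) {f : ℝ → ℝ} {M : ℝ}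
    (hM : ∀ x ∈ I, |f x| ≤ M) (hn : 1 ≤ n) (j : ℕ) (t : ℝ) :
    modCont ((fun g : ℝ → ℝ => bernOp n (g ∘ φ))^[j] f) t ≤ modCont f (L ^ j * t) +
      5 / 2 * ∑ i ∈ range j, modCont ((fun g : ℝ → ℝ => bernOp n (g ∘ φ))^[i] f) (L * (1 / √n)) := by
  induction j generalizing t with
  | zero => simp
  | succ j ih =>
    rw [Function.iterate_succ_apply', sum_range_succ, pow_succ, mul_assoc]
    have := modCont_bernOp_comp_le hφ hL0 hL (abs_iterate_bernOp_comp_le (n := n) hφ hM j) hn t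
    linarith [ih (L * t)]

end KoopmanBernstein

theorem stmt18_general (φ : ℝ → ℝ)
    (hφmap : Set.MapsTo φ (Set.Icc (0 : ℝ) 1) (Set.Icc (0 : ℝ) 1))
    (Lφ : ℝ) (hLφ1 : 1 ≤ Lφ)
    (hL : ∀ x ∈ Set.Icc (0 : ℝ) 1, ∀ y ∈ Set.Icc (0 : ℝ) 1,
      |φ x - φ y| ≤ Lφ * |x - y|)
    (f : ℝ → ℝ) (hf : ContinuousOn f (Set.Icc (0 : ℝ) 1))
    (n : ℕ) (hn : 1 ≤ n) (k : ℕ)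
    (δ : ℝ) (hδ : δ = 1 / Real.sqrt n) :
    ∑ j ∈ Finset.range k,
        modCont ((fun g : ℝ → ℝ => bernOp n (g ∘ φ))^[j] f) (Lφ * δ)
      ≤ ∑ l ∈ Finset.Icc 1 k, (4 : ℝ) ^ (k - l) * modCont f (Lφ ^ l * δ) := by
  subst hδ
  obtain ⟨M, hM⟩ : ∃ M, ∀ x ∈ I, |f x| ≤ M := by
    simpa only [Real.norm_eq_abs] using isCompact_Icc.exists_bound_of_continuousOn hf
  set S : ℕ → ℝ := fun j => ∑ i ∈ range j,
    modCont ((fun g : ℝ → ℝ => bernOp n (g ∘ φ))^[i] f) (Lφ * (1 / √n))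
  have hS : ∀ j, S (j + 1) ≤ 4 * S j + modCont f (Lφ ^ (j + 1) * (1 / √n)) := fun j => by
    have hSj : 0 ≤ S j := sum_nonneg fun i _ => modCont_nonneg _ _
    have := modCont_iterate_bernOp_comp_le hφmap (zero_le_one.trans hLφ1) hL hM hn j
      (Lφ * (1 / √n))
    rw [← mul_assoc, ← pow_succ] at this
    simp only [S, sum_range_succ] at hSj ⊢
    linarith
  exact le_sum_pow_mul_of_le_mul_add (S := S) (b := fun l => modCont f (Lφ ^ l * (1 / √n)))
    (by norm_num) (sum_range_zero _).le hS k

theorem stmt18 (φ : ℝ → ℝ)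
    (hφmap : Set.MapsTo φ (Set.Icc (0 : ℝ) 1) (Set.Icc (0 : ℝ) 1))
    (Lφ : ℝ) (hLφ1 : 1 ≤ Lφ)
    (hL : ∀ x ∈ Set.Icc (0 : ℝ) 1, ∀ y ∈ Set.Icc (0 : ℝ) 1,
      |φ x - φ y| ≤ Lφ * |x - y|)
    (f : ℝ → ℝ) (hf : ContinuousOn f (Set.Icc (0 : ℝ) 1))
    (n : ℕ) (hn : 1 ≤ n) (k : ℕ) (hk : 1 ≤ k)
    (δ : ℝ) (hδ : δ = 1 / Real.sqrt n) :
    ∑ j ∈ Finset.range k,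
        modCont ((fun g : ℝ → ℝ => bernOp n (g ∘ φ))^[j] f) (Lφ * δ)
      ≤ ∑ l ∈ Finset.Icc 1 k, (4 : ℝ) ^ (k - l) * modCont f (Lφ ^ l * δ) :=
  stmt18_general φ hφmap Lφ hLφ1 hL f hf n hn k δ hδ
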